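/- arXiv:2508.13931 — 5 statements merged into one kernel-verified Lean document; each statement's English description precedes it below -/
import Mathlib

section
/- Let f : [0,1] → ℝ be continuous and let m ≥ 1 be an integer. Then for every x ∈ [0,1], |B_m(f;x) − f(x)| ≤ (3/2)·ω₂(f; σ(x)/√m). -/
open Set Finset

/-- Bernstein basis polynomial `p_{m,k}(x) = C(m,k) x^k (1-x)^{m-k}`. -/
noncomputable def bern (m k : ℕ) (x : ℝ) : ℝ :=
  (m.choose k : ℝ) * x ^ k * (1 - x) ^ (m - k)

/-- The `m`-th Bernstein polynomial of `f`. -/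
noncomputable def Bpoly (m : ℕ) (f : ℝ → ℝ) (x : ℝ) : ℝ :=
  ∑ k ∈ Finset.range (m + 1), f ((k : ℝ) / m) * bern m k x

/-- `σ(x) = √(x(1-x))`. -/
noncomputable def sigm (x : ℝ) : ℝ := Real.sqrt (x * (1 - x))

/-- The second modulus of continuity of `f` on `[0,1]`. -/
noncomputable def omega2 (f : ℝ → ℝ) (δ : ℝ) : ℝ :=
  sSup {v | ∃ x h : ℝ, 0 ≤ h ∧ h ≤ δ ∧ x - h ∈ Set.Icc (0:ℝ) 1 ∧ x + h ∈ Set.Icc (0:ℝ) 1 ∧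
    v = |f (x + h) - 2 * f x + f (x - h)|}

/-!
If every second difference of `f` with step at most `h` is at most `ω` in absolute value, a
maximum principle (comparing with the parabola `ω + ω (u - a)(b - u) / (2h²)`) bounds how far `f`
strays from its chord over any subinterval `[a, b]`. These three-point bounds say exactly that
the intervals of slopes `c` with `|f t - f x - c (t - x)| ≤ ω + ω (t - x)² / (2h²)`, one for each
`t ≠ x`, meet pairwise, so by Helly's theorem on the line they share a slope `c`. The Bernstein
operator is positive and reproduces affine functions, and its second central moment at `x` is
`x (1 - x) / m = h²` for `h = σ(x)/√m`; applied to `f - f x - c (· - x)` it gives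
`|B_m f x - f x| ≤ ω + ω h² / (2h²) = (3/2) ω`.
-/

lemma exists_forall_abs_sub_le {ι : Type*} (a r : ι → ℝ) (h : ∀ i j, a i - r i ≤ a j + r j) :
    ∃ c, ∀ i, |c - a i| ≤ r i := by
  rcases isEmpty_or_nonempty ι with hι | hι
  · exact ⟨0, isEmptyElim⟩
  have hbdd : BddAbove (Set.range fun i => a i - r i) :=
    ⟨a hι.some + r hι.some, by rintro _ ⟨i, rfl⟩; exact h i _⟩
  refine ⟨⨆ i, (a i - r i), fun i => abs_sub_le_iff.2 ⟨?_, ?_⟩⟩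
  · linarith [ciSup_le fun k => h k i]
  · linarith [le_ciSup hbdd i]

lemma exists_forall_abs_sub_mul_le {S : Set ℝ} {x : ℝ} {φ W : ℝ → ℝ}
    (h : ∀ s ∈ S, ∀ t ∈ S, |φ s * (t - x) - φ t * (s - x)| ≤ W s * |t - x| + W t * |s - x|) :
    ∃ c, ∀ t ∈ S, t ≠ x → |φ t - c * (t - x)| ≤ W t := by
  obtain ⟨c, hc⟩ := exists_forall_abs_sub_le (ι := {t // t ∈ S ∧ t ≠ x})
    (fun t => φ t / (t - x)) (fun t => W t / |t - x|) fun ⟨s, hs, hsx⟩ ⟨t, ht, htx⟩ => by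
      have hs' : s - x ≠ 0 := sub_ne_zero.2 hsx
      have ht' : t - x ≠ 0 := sub_ne_zero.2 htx
      have key : |φ s / (s - x) - φ t / (t - x)| ≤ W s / |s - x| + W t / |t - x| := by
        rw [div_sub_div _ _ hs' ht', abs_div, abs_mul,
          div_le_iff₀ (mul_pos (abs_pos.2 hs') (abs_pos.2 ht')), mul_comm (s - x)]
        refine (h s hs t ht).trans_eq ?_
        rw [add_mul, ← mul_assoc, div_mul_cancel₀ _ (abs_ne_zero.2 hs'), mul_comm |s - x|,
          ← mul_assoc, div_mul_cancel₀ _ (abs_ne_zero.2 ht')]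
      linarith [(abs_le.1 key).2]
  refine ⟨c, fun t ht htx => ?_⟩
  have ht' : 0 < |t - x| := abs_pos.2 (sub_ne_zero.2 htx)
  calc |φ t - c * (t - x)| = |c - φ t / (t - x)| * |t - x| := by
        rw [← abs_mul, abs_sub_comm, sub_mul, div_mul_cancel₀ _ (sub_ne_zero.2 htx)]
    _ ≤ W t / |t - x| * |t - x| := mul_le_mul_of_nonneg_right (hc ⟨t, ht, htx⟩) ht'.le
    _ = W t := div_mul_cancel₀ _ ht'.ne'

def SecondDiffBoundedOn (f : ℝ → ℝ) (S : Set ℝ) (h ω : ℝ) : Prop :=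
  ∀ y s, 0 < s → s ≤ h → y - s ∈ S → y + s ∈ S → |f (y + s) - 2 * f y + f (y - s)| ≤ ω

open Filter Topology

namespace SecondDiffBoundedOn

variable {f g : ℝ → ℝ} {S T : Set ℝ} {h ω : ℝ}

lemma mono (hf : SecondDiffBoundedOn f T h ω) (hST : S ⊆ T) : SecondDiffBoundedOn f S h ω :=
  fun y s hs hsh h₁ h₂ => hf y s hs hsh (hST h₁) (hST h₂)

lemma mul_add_affine (hf : SecondDiffBoundedOn f S h ω) {α : ℝ} (hα : 0 ≤ α) (β γ : ℝ) :
    SecondDiffBoundedOn (fun u => α * f u + β * u + γ) S h (α * ω) := by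
  intro y s hs hsh h₁ h₂
  calc |α * f (y + s) + β * (y + s) + γ - 2 * (α * f y + β * y + γ)
        + (α * f (y - s) + β * (y - s) + γ)|
      = α * |f (y + s) - 2 * f y + f (y - s)| := by
        rw [← abs_of_nonneg hα, ← abs_mul, abs_of_nonneg hα]
        ring_nf
    _ ≤ α * ω := mul_le_mul_of_nonneg_left (hf y s hs hsh h₁ h₂) hα

variable {a b κ u : ℝ}

lemma abs_le_of_lt (hg : ContinuousOn g (Icc a b)) (hga : g a = 0) (hgb : g b = 0)
    (hgh : SecondDiffBoundedOn g (Icc a b) h ω) (hh : 0 < h) (hω : 0 ≤ ω)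
    (hκ : ω < 2 * h ^ 2 * κ) (hu : u ∈ Icc a b) :
    |g u| ≤ ω + κ * ((u - a) * (b - u)) := by
  by_contra! hlt
  have hκ0 : 0 < κ := pos_of_mul_pos_right (hω.trans_lt hκ) (by positivity)
  obtain ⟨z, hz, hzmax⟩ := isCompact_Icc.exists_isMaxOn ⟨u, hu⟩
    (f := fun t => |g t| - (ω + κ * ((t - a) * (b - t)))) (by fun_prop)
  obtain ⟨M, hM⟩ : ∃ M, M = |g z| - (ω + κ * ((z - a) * (b - z))) := ⟨_, rfl⟩
  have hbound : ∀ t ∈ Icc a b, |g t| ≤ ω + κ * ((t - a) * (b - t)) + M := fun t ht => by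
    linarith [isMaxOn_iff.1 hzmax t ht]
  have hM0 : 0 < M := by linarith [hbound u hu]
  have hza : a < z := hz.1.lt_of_ne <| by
    rintro rfl
    simp only [hga, abs_zero, sub_self, zero_mul, mul_zero] at hM
    linarith
  have hzb : z < b := hz.2.lt_of_ne <| by
    rintro rfl
    simp only [hgb, abs_zero, sub_self, mul_zero] at hM
    linarith
  -- If `ρ = h`, the second difference `-2κh²` of the comparison parabola beats `ω`; otherwise
  -- `z - ρ` or `z + ρ` is an endpoint, where `g` vanishes and so lies `ω` below the parabola.
  obtain ⟨ρ, hρ, hρh, hρa, hρb, hρcases⟩ : ∃ ρ, 0 < ρ ∧ ρ ≤ h ∧ a ≤ z - ρ ∧ z + ρ ≤ b ∧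
      (ρ = h ∨ z - ρ = a ∨ z + ρ = b) := by
    refine ⟨min h (min (z - a) (b - z)), lt_min hh (lt_min (by linarith) (by linarith)),
      min_le_left _ _, ?_, ?_, ?_⟩
    · linarith [min_le_right h (min (z - a) (b - z)), min_le_left (z - a) (b - z)]
    · linarith [min_le_right h (min (z - a) (b - z)), min_le_right (z - a) (b - z)]
    · rcases min_choice h (min (z - a) (b - z)) with e | e <;> rw [e]
      · exact Or.inl rfl
      · rcases min_choice (z - a) (b - z) with e' | e' <;> rw [e'] <;> simp
  have hΔ := hgh z ρ hρ hρh ⟨hρa, by linarith⟩ ⟨by linarith, hρb⟩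
  have htri : 2 * |g z| ≤ |g (z + ρ)| + |g (z - ρ)| + ω := by
    rcases abs_cases (g z) with ⟨e, -⟩ | ⟨e, -⟩ <;> rw [e] <;>
      linarith [le_abs_self (g (z + ρ)), neg_abs_le (g (z + ρ)), le_abs_self (g (z - ρ)),
        neg_abs_le (g (z - ρ)), (abs_le.1 hΔ).1, (abs_le.1 hΔ).2]
  have hκρ : 0 < κ * ρ ^ 2 := by positivity
  rcases hρcases with rfl | rfl | hρb'
  · linarith [hbound (z + ρ) ⟨by linarith, hρb⟩, hbound (z - ρ) ⟨hρa, by linarith⟩]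
  · rw [hga, abs_zero] at htri
    linarith [hbound (z + ρ) ⟨by linarith, hρb⟩]
  · obtain rfl := hρb'
    rw [hgb, abs_zero] at htri
    linarith [hbound (z - ρ) ⟨hρa, by linarith⟩]

lemma abs_le (hg : ContinuousOn g (Icc a b)) (hga : g a = 0) (hgb : g b = 0)
    (hgh : SecondDiffBoundedOn g (Icc a b) h ω) (hh : 0 < h) (hω : 0 ≤ ω) (hu : u ∈ Icc a b) :
    |g u| ≤ ω + ω / (2 * h ^ 2) * ((u - a) * (b - u)) := by
  have hlim : Tendsto (fun κ => ω + κ * ((u - a) * (b - u))) (𝓝[>] (ω / (2 * h ^ 2)))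
      (𝓝 (ω + ω / (2 * h ^ 2) * ((u - a) * (b - u)))) :=
    (Continuous.tendsto (by fun_prop) _).mono_left nhdsWithin_le_nhds
  refine ge_of_tendsto hlim (eventually_nhdsWithin_of_forall fun κ hκ => ?_)
  refine abs_le_of_lt hg hga hgb hgh hh hω ?_ hu
  rwa [Set.mem_Ioi, div_lt_iff₀ (by positivity), mul_comm] at hκ

lemma abs_chord_sub_le {p q r : ℝ} (hf : ContinuousOn f (Icc p r))
    (hfh : SecondDiffBoundedOn f (Icc p r) h ω) (hh : 0 < h) (hω : 0 ≤ ω) (hpq : p ≤ q)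
    (hqr : q ≤ r) :
    |(r - q) * f p - (r - p) * f q + (q - p) * f r| ≤
      (r - p) * (ω + ω / (2 * h ^ 2) * ((q - p) * (r - q))) := by
  have hrp : 0 ≤ r - p := by linarith
  have hg := (hfh.mul_add_affine hrp (f p - f r) (p * f r - r * f p)).abs_le (by fun_prop)
    (by ring) (by ring) hh (mul_nonneg hrp hω) ⟨hpq, hqr⟩
  rw [← abs_neg]
  convert hg using 2 <;> ring

lemma abs_slope_cross_le (hf : ContinuousOn f (Icc a b))
    (hfh : SecondDiffBoundedOn f (Icc a b) h ω) (hh : 0 < h) (hω : 0 ≤ ω) {x s t : ℝ}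
    (hx : x ∈ Icc a b) (hs : s ∈ Icc a b) (ht : t ∈ Icc a b) :
    |(f s - f x) * (t - x) - (f t - f x) * (s - x)| ≤
      (ω + ω / (2 * h ^ 2) * (s - x) ^ 2) * |t - x| +
        (ω + ω / (2 * h ^ 2) * (t - x) ^ 2) * |s - x| := by
  wlog hst : s ≤ t generalizing s t
  · rw [abs_sub_comm, add_comm]
    exact this ht hs (le_of_not_ge hst)
  have chord : ∀ {p q r}, p ∈ Icc a b → r ∈ Icc a b → p ≤ q → q ≤ r →
      |(r - q) * f p - (r - p) * f q + (q - p) * f r| ≤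
        (r - p) * (ω + ω / (2 * h ^ 2) * ((q - p) * (r - q))) := fun hp hr hpq hqr =>
    abs_chord_sub_le (hf.mono (Icc_subset_Icc hp.1 hr.2)) (hfh.mono (Icc_subset_Icc hp.1 hr.2))
      hh hω hpq hqr
  have hκ : 0 ≤ ω / (2 * h ^ 2) := by positivity
  set κ := ω / (2 * h ^ 2)
  rcases le_total x s with hxs | hsx
  · have hc := chord hx ht hxs hst
    rw [show (f s - f x) * (t - x) - (f t - f x) * (s - x) =
        -((t - s) * f x - (t - x) * f s + (s - x) * f t) by ring, abs_neg,
      abs_of_nonneg (by linarith : 0 ≤ t - x), abs_of_nonneg (sub_nonneg.2 hxs)]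
    linarith [mul_nonneg hω (sub_nonneg.2 hxs),
      mul_nonneg (mul_nonneg hκ (sq_nonneg (s - x))) (by linarith : 0 ≤ t - x)]
  rcases le_total x t with hxt | htx
  · have hc := chord hs ht hsx hxt
    rw [show (f s - f x) * (t - x) - (f t - f x) * (s - x) =
        (t - x) * f s - (t - s) * f x + (x - s) * f t by ring,
      abs_of_nonneg (sub_nonneg.2 hxt), abs_of_nonpos (sub_nonpos.2 hsx)]
    linarith
  · have hc := chord hs hx hst htx
    rw [show (f s - f x) * (t - x) - (f t - f x) * (s - x) =
        -((x - t) * f s - (x - s) * f t + (t - s) * f x) by ring, abs_neg,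
      abs_of_nonpos (sub_nonpos.2 htx), abs_of_nonpos (sub_nonpos.2 hsx)]
    linarith [mul_nonneg hω (sub_nonneg.2 htx),
      mul_nonneg (mul_nonneg hκ (sq_nonneg (x - t))) (by linarith : 0 ≤ x - s)]

lemma exists_abs_sub_sub_mul_le (hf : ContinuousOn f (Icc a b))
    (hfh : SecondDiffBoundedOn f (Icc a b) h ω) (hh : 0 < h) (hω : 0 ≤ ω) {x : ℝ}
    (hx : x ∈ Icc a b) :
    ∃ c, ∀ t ∈ Icc a b, |f t - f x - c * (t - x)| ≤ ω + ω / (2 * h ^ 2) * (t - x) ^ 2 := by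
  obtain ⟨c, hc⟩ := exists_forall_abs_sub_mul_le (φ := fun t => f t - f x)
    (W := fun t => ω + ω / (2 * h ^ 2) * (t - x) ^ 2)
    fun s hs t ht => hfh.abs_slope_cross_le hf hh hω hx hs ht
  refine ⟨c, fun t ht => ?_⟩
  rcases eq_or_ne t x with rfl | htx
  · simpa using hω
  · exact hc t ht htx

end SecondDiffBoundedOn

lemma abs_secondDiff_le_omega2 {f : ℝ → ℝ} (hf : ContinuousOn f (Icc 0 1)) {δ y s : ℝ}
    (hs : 0 ≤ s) (hsδ : s ≤ δ) (h₁ : y - s ∈ Icc (0 : ℝ) 1) (h₂ : y + s ∈ Icc (0 : ℝ) 1) :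
    |f (y + s) - 2 * f y + f (y - s)| ≤ omega2 f δ := by
  obtain ⟨C, hC⟩ := isCompact_Icc.exists_bound_of_continuousOn hf
  refine le_csSup ⟨4 * C, ?_⟩ ⟨y, s, hs, hsδ, h₁, h₂, rfl⟩
  rintro _ ⟨y, s, hs, -, h₁, h₂, rfl⟩
  have hy : y ∈ Icc (0 : ℝ) 1 := ⟨by linarith [h₁.1], by linarith [h₂.2]⟩
  have b₁ := abs_le.1 (hC _ h₂)
  have b₂ := abs_le.1 (hC _ hy)
  have b₃ := abs_le.1 (hC _ h₁)
  exact abs_le.2 ⟨by linarith, by linarith⟩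

lemma secondDiffBoundedOn_omega2 {f : ℝ → ℝ} (hf : ContinuousOn f (Icc 0 1)) (δ : ℝ) :
    SecondDiffBoundedOn f (Icc 0 1) δ (omega2 f δ) :=
  fun _ _ hs hsδ h₁ h₂ => abs_secondDiff_le_omega2 hf hs.le hsδ h₁ h₂

lemma omega2_nonneg {f : ℝ → ℝ} (hf : ContinuousOn f (Icc 0 1)) {δ : ℝ} (hδ : 0 ≤ δ) :
    0 ≤ omega2 f δ := by
  have h₀ := abs_secondDiff_le_omega2 hf (y := 0) le_rfl hδ (by simp) (by simp)
  rwa [show f (0 + 0) - 2 * f 0 + f (0 - 0) = 0 by ring_nf, abs_zero] at h₀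

lemma bern_eq_eval (m k : ℕ) (x : ℝ) :
    bern m k x = (bernsteinPolynomial ℝ m k).eval x := by
  simp [bern, bernsteinPolynomial]

lemma bern_nonneg (m k : ℕ) {x : ℝ} (hx : x ∈ Icc (0 : ℝ) 1) : 0 ≤ bern m k x := by
  have hx₀ : 0 ≤ x := hx.1
  have hx₁ : 0 ≤ 1 - x := sub_nonneg.2 hx.2
  unfold bern
  positivity

lemma sum_bern (m : ℕ) (x : ℝ) : ∑ k ∈ range (m + 1), bern m k x = 1 := by
  simpa [Polynomial.eval_finsetSum, bern_eq_eval] using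
    congrArg (Polynomial.eval x) (bernsteinPolynomial.sum ℝ m)

lemma sum_sub_mul_bern {m : ℕ} (hm : m ≠ 0) (x : ℝ) :
    ∑ k ∈ range (m + 1), ((k : ℝ) / m - x) * bern m k x = 0 := by
  have h := congrArg (Polynomial.eval x) (bernsteinPolynomial.sum_smul ℝ m)
  simp only [Polynomial.eval_finsetSum, nsmul_eq_mul, Polynomial.eval_mul,
    Polynomial.eval_natCast, Polynomial.eval_X, ← bern_eq_eval] at h
  simp only [sub_mul, sum_sub_distrib, div_mul_eq_mul_div, ← sum_div, h, ← mul_sum, sum_bern]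
  field_simp
  ring

lemma sum_sq_sub_mul_bern {m : ℕ} (hm : m ≠ 0) (x : ℝ) :
    ∑ k ∈ range (m + 1), ((k : ℝ) / m - x) ^ 2 * bern m k x = x * (1 - x) / m := by
  have h := congrArg (Polynomial.eval x) (bernsteinPolynomial.variance ℝ m)
  simp only [Polynomial.eval_finsetSum, Polynomial.eval_mul, Polynomial.eval_pow,
    Polynomial.eval_sub, nsmul_eq_mul, Polynomial.eval_X,
    Polynomial.eval_natCast, Polynomial.eval_one, ← bern_eq_eval] at h
  have hm' : (m : ℝ) ≠ 0 := by exact_mod_cast hm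
  calc ∑ k ∈ range (m + 1), ((k : ℝ) / m - x) ^ 2 * bern m k x
      = (∑ k ∈ range (m + 1), ((m : ℝ) * x - k) ^ 2 * bern m k x) / m ^ 2 := by
        rw [sum_div]
        refine sum_congr rfl fun k _ => ?_
        field_simp
        ring
    _ = x * (1 - x) / m := by
        rw [h]
        field_simp

lemma Bpoly_sub_eq_sum {m : ℕ} (hm : m ≠ 0) (f : ℝ → ℝ) (x c : ℝ) :
    Bpoly m f x - f x =
      ∑ k ∈ range (m + 1), (f ((k : ℝ) / m) - f x - c * ((k : ℝ) / m - x)) * bern m k x := by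
  have hterm : ∀ k : ℕ, (f ((k : ℝ) / m) - f x - c * ((k : ℝ) / m - x)) * bern m k x =
      f ((k : ℝ) / m) * bern m k x - f x * bern m k x - c * (((k : ℝ) / m - x) * bern m k x) :=
    fun k => by ring
  simp only [hterm, sum_sub_distrib, ← mul_sum, sum_sub_mul_bern hm, sum_bern, Bpoly]
  ring

lemma abs_Bpoly_sub_le {m : ℕ} (hm : m ≠ 0) {f : ℝ → ℝ} {x c A B : ℝ} (hx : x ∈ Icc (0 : ℝ) 1)
    (hf : ∀ t ∈ Icc (0 : ℝ) 1, |f t - f x - c * (t - x)| ≤ A + B * (t - x) ^ 2) :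
    |Bpoly m f x - f x| ≤ A + B * (x * (1 - x) / m) := by
  have hnode : ∀ k ∈ range (m + 1), (k : ℝ) / m ∈ Icc (0 : ℝ) 1 := fun k hk =>
    ⟨by positivity, div_le_one_of_le₀ (by exact_mod_cast mem_range_succ_iff.1 hk) (by positivity)⟩
  calc |Bpoly m f x - f x|
      ≤ ∑ k ∈ range (m + 1), |f ((k : ℝ) / m) - f x - c * ((k : ℝ) / m - x)| * bern m k x := by
        rw [Bpoly_sub_eq_sum hm f x c]
        refine (abs_sum_le_sum_abs _ _).trans_eq (sum_congr rfl fun k _ => ?_)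
        rw [abs_mul, abs_of_nonneg (bern_nonneg m k hx)]
    _ ≤ ∑ k ∈ range (m + 1), (A + B * ((k : ℝ) / m - x) ^ 2) * bern m k x :=
        sum_le_sum fun k hk => mul_le_mul_of_nonneg_right (hf _ (hnode k hk)) (bern_nonneg m k hx)
    _ = A + B * (x * (1 - x) / m) := by
        simp only [add_mul, sum_add_distrib, mul_assoc, ← mul_sum, sum_bern,
          sum_sq_sub_mul_bern hm]
        ring

lemma Bpoly_eq_self_of_mul_one_sub_eq_zero {m : ℕ} (hm : m ≠ 0) (f : ℝ → ℝ) {x : ℝ}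
    (hx : x ∈ Icc (0 : ℝ) 1) (hx' : x * (1 - x) = 0) : Bpoly m f x = f x := by
  have hvar := sum_sq_sub_mul_bern hm x
  rw [hx', zero_div, sum_eq_zero_iff_of_nonneg fun k _ =>
    mul_nonneg (sq_nonneg _) (bern_nonneg m k hx)] at hvar
  rw [← sub_eq_zero, Bpoly_sub_eq_sum hm f x 0]
  refine sum_eq_zero fun k hk => ?_
  rcases mul_eq_zero.1 (hvar k hk) with hnode | hzero
  · rw [sub_eq_zero.1 (pow_eq_zero_iff two_ne_zero |>.1 hnode)]
    ring
  · rw [hzero, mul_zero]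

theorem bernstein_pointwise_bound (f : ℝ → ℝ) (hf : ContinuousOn f (Set.Icc 0 1))
    (m : ℕ) (hm : 1 ≤ m) (x : ℝ) (hx : x ∈ Set.Icc (0:ℝ) 1) :
    |Bpoly m f x - f x| ≤ (3 / 2) * omega2 f (sigm x / Real.sqrt m) := by
  have hm0 : m ≠ 0 := by omega
  rcases (mul_nonneg hx.1 (sub_nonneg.2 hx.2)).eq_or_lt with hx0 | hx0
  · rw [Bpoly_eq_self_of_mul_one_sub_eq_zero hm0 f hx hx0.symm, sub_self, abs_zero]
    exact mul_nonneg (by norm_num) (omega2_nonneg hf (by unfold sigm; positivity))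
  set h := sigm x / Real.sqrt m
  have hh : 0 < h := div_pos (Real.sqrt_pos.2 hx0) (Real.sqrt_pos.2 (by positivity))
  have hh2 : h ^ 2 = x * (1 - x) / m := by
    rw [div_pow, sigm, Real.sq_sqrt hx0.le, Real.sq_sqrt (Nat.cast_nonneg m)]
  have hω := omega2_nonneg hf hh.le
  obtain ⟨c, hc⟩ := (secondDiffBoundedOn_omega2 hf h).exists_abs_sub_sub_mul_le hf hh hω hx
  calc |Bpoly m f x - f x| ≤ omega2 f h + omega2 f h / (2 * h ^ 2) * (x * (1 - x) / m) :=
        abs_Bpoly_sub_le hm0 hx hc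
    _ = 3 / 2 * omega2 f h := by
        rw [← hh2]
        field_simp
        ring
end

section
/- Let k ≥ 0 and m > k be integers, let μ be a probability measure on ℝ with μ([0,k]) = 1, and let f : [0,1] → ℝ be continuous with f(t) = c for all t ∈ (a,b), where 0 < a < b < 1 and c is a constant. Then for every x ∈ ( ma/(m−k), (mb−k)/(m−k) ), |L_{m,k}(f;x) − f(x)| ≤ ‖f − c‖ · [ exp( −(m−k)·r(x, ma/(m−k)) ) + exp( −(m−k)·r(x, (mb−k)/(m−k)) ) ], where ‖f − c‖ = sup_{t∈[0,1]} |f(t) − c|. -/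
/-!
Write `n = m - k`, `θ₁ = ma/n` and `θ₂ = (mb - k)/n`. Since `f(x) = c` and the Bernstein weights
sum to one, `L_{m,k}(f;x) - f(x) = Σ_l p_{n,l}(x) (∫ f((l+t)/m) dμ(t) - c)`. Each bracket is at
most `‖f - c‖` in absolute value, and it vanishes when `nθ₁ < l < nθ₂`, because then
`(l+t)/m ∈ (a,b)` for all `t ∈ [0,k]`. What remains are the binomial tails `l ≤ nθ₁` and
`l ≥ nθ₂`, and the Chernoff bound (tilting by `s^(l - nθ)` with the optimal `s`) bounds the tail
at `θ` by `exp(-n r(x,θ))`.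
-/

open Set Finset MeasureTheory

/-- Bernstein–Kantorovich type operator
`L_{m,k}(f;x) = Σ_{l=0}^{m-k} p_{m-k,l}(x) ∫ f((l+t)/m) dμ(t)`. -/
noncomputable def Lop (m k : ℕ) (μ : Measure ℝ) (f : ℝ → ℝ) (x : ℝ) : ℝ :=
  ∑ l ∈ Finset.range (m - k + 1), bern (m - k) l x * ∫ t, f (((l : ℝ) + t) / m) ∂μ

/-- `r(x,θ) = θ log(θ/x) + (1-θ) log((1-θ)/(1-x))`. -/
noncomputable def rfun (x θ : ℝ) : ℝ :=
  θ * Real.log (θ / x) + (1 - θ) * Real.log ((1 - θ) / (1 - x))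

lemma bern_nonneg_s4 (n l : ℕ) {x : ℝ} (hx₀ : 0 ≤ x) (hx₁ : x ≤ 1) : 0 ≤ bern n l x := by
  have : 0 ≤ 1 - x := by linarith
  unfold bern; positivity

lemma sum_bern_eq_one (n : ℕ) (x : ℝ) : ∑ l ∈ range (n + 1), bern n l x = 1 := by
  calc ∑ l ∈ range (n + 1), bern n l x
      = ∑ l ∈ range (n + 1), x ^ l * (1 - x) ^ (n - l) * (n.choose l : ℝ) :=
        Finset.sum_congr rfl fun l _ => by rw [bern]; ring
    _ = (x + (1 - x)) ^ n := (add_pow x (1 - x) n).symm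
    _ = 1 := by norm_num

section Chernoff

lemma sum_rpow_mul_bern (n : ℕ) {s : ℝ} (hs : 0 < s) (x θ : ℝ) :
    ∑ l ∈ range (n + 1), s ^ ((l : ℝ) - n * θ) * bern n l x
      = s ^ (-(n * θ)) * (s * x + (1 - x)) ^ n := by
  rw [add_pow, Finset.mul_sum]
  refine Finset.sum_congr rfl fun l _ => ?_
  rw [sub_eq_neg_add, Real.rpow_add hs, Real.rpow_natCast, bern, mul_pow]
  ring

/-- The tilt `s` minimising `s^(-nθ) (s x + 1 - x)^n`. -/
noncomputable def chernoffTilt (x θ : ℝ) : ℝ := θ * (1 - x) / ((1 - θ) * x)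

variable {x θ : ℝ}

lemma chernoffTilt_pos (hx₀ : 0 < x) (hx₁ : x < 1) (hθ₀ : 0 < θ) (hθ₁ : θ < 1) :
    0 < chernoffTilt x θ := by
  have : 0 < 1 - x := by linarith
  have : 0 < 1 - θ := by linarith
  unfold chernoffTilt; positivity

lemma chernoffTilt_rpow_mul_pow (n : ℕ) (hx₀ : 0 < x) (hx₁ : x < 1) (hθ₀ : 0 < θ)
    (hθ₁ : θ < 1) :
    chernoffTilt x θ ^ (-(n * θ)) * (chernoffTilt x θ * x + (1 - x)) ^ n
      = Real.exp (-n * rfun x θ) := by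
  have h1x : 0 < 1 - x := by linarith
  have h1θ : 0 < 1 - θ := by linarith
  have hs := chernoffTilt_pos hx₀ hx₁ hθ₀ hθ₁
  have hsum : chernoffTilt x θ * x + (1 - x) = (1 - x) / (1 - θ) := by
    unfold chernoffTilt; field_simp; ring
  have hpos : 0 < chernoffTilt x θ ^ (-(n * θ)) * ((1 - x) / (1 - θ)) ^ n := by positivity
  rw [hsum, ← Real.exp_log hpos]
  congr 1
  rw [Real.log_mul (by positivity) (by positivity), Real.log_rpow hs,
    Real.log_pow, chernoffTilt, rfun]
  simp only [Real.log_div (by positivity : θ * (1 - x) ≠ 0) (by positivity : (1 - θ) * x ≠ 0),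
    Real.log_mul (by positivity : θ ≠ 0) (by positivity : 1 - x ≠ 0),
    Real.log_mul (by positivity : 1 - θ ≠ 0) (by positivity : x ≠ 0),
    Real.log_div (by positivity : θ ≠ 0) (by positivity : x ≠ 0),
    Real.log_div (by positivity : 1 - θ ≠ 0) (by positivity : 1 - x ≠ 0),
    Real.log_div (by positivity : 1 - x ≠ 0) (by positivity : 1 - θ ≠ 0)]
  ring

lemma sum_bern_le_exp_of_one_le_rpow {n : ℕ} {S : Finset ℕ} (hS : S ⊆ range (n + 1))
    (hx₀ : 0 < x) (hx₁ : x < 1) (hθ₀ : 0 < θ) (hθ₁ : θ < 1)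
    (htilt : ∀ l ∈ S, 1 ≤ chernoffTilt x θ ^ ((l : ℝ) - n * θ)) :
    ∑ l ∈ S, bern n l x ≤ Real.exp (-n * rfun x θ) := by
  have hb : ∀ l, 0 ≤ bern n l x := fun l => bern_nonneg_s4 n l hx₀.le hx₁.le
  have hs := chernoffTilt_pos hx₀ hx₁ hθ₀ hθ₁
  calc ∑ l ∈ S, bern n l x
      ≤ ∑ l ∈ S, chernoffTilt x θ ^ ((l : ℝ) - n * θ) * bern n l x :=
        Finset.sum_le_sum fun l hl => le_mul_of_one_le_left (hb l) (htilt l hl)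
    _ ≤ ∑ l ∈ range (n + 1), chernoffTilt x θ ^ ((l : ℝ) - n * θ) * bern n l x :=
        Finset.sum_le_sum_of_subset_of_nonneg hS fun l _ _ =>
          mul_nonneg (Real.rpow_nonneg hs.le _) (hb l)
    _ = Real.exp (-n * rfun x θ) := by
        rw [sum_rpow_mul_bern n hs, chernoffTilt_rpow_mul_pow n hx₀ hx₁ hθ₀ hθ₁]

lemma sum_bern_lowerTail_le_exp (n : ℕ) (hθ₀ : 0 < θ) (hθx : θ ≤ x) (hx₁ : x < 1) :
    ∑ l ∈ range (n + 1) with ((l : ℕ) : ℝ) ≤ n * θ, bern n l x ≤ Real.exp (-n * rfun x θ) := by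
  have hx₀ : 0 < x := hθ₀.trans_le hθx
  have hs_le : chernoffTilt x θ ≤ 1 := by
    rw [chernoffTilt, div_le_one (by nlinarith)]; nlinarith
  refine sum_bern_le_exp_of_one_le_rpow (filter_subset _ _) hx₀ hx₁ hθ₀ (hθx.trans_lt hx₁)
    fun l hl => ?_
  rw [← Real.rpow_zero (chernoffTilt x θ)]
  exact Real.rpow_le_rpow_of_exponent_ge (chernoffTilt_pos hx₀ hx₁ hθ₀ (hθx.trans_lt hx₁)) hs_le
    (by linarith [(Finset.mem_filter.1 hl).2])

lemma sum_bern_upperTail_le_exp (n : ℕ) (hx₀ : 0 < x) (hxθ : x ≤ θ) (hθ₁ : θ < 1) :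
    ∑ l ∈ range (n + 1) with n * θ ≤ ((l : ℕ) : ℝ), bern n l x ≤ Real.exp (-n * rfun x θ) := by
  have hx₁ : x < 1 := hxθ.trans_lt hθ₁
  have hs_ge : 1 ≤ chernoffTilt x θ := by
    rw [chernoffTilt, one_le_div (by nlinarith)]; nlinarith
  exact sum_bern_le_exp_of_one_le_rpow (filter_subset _ _) hx₀ hx₁ (hx₀.trans_le hxθ) hθ₁
    fun l hl => Real.one_le_rpow hs_ge (by linarith [(Finset.mem_filter.1 hl).2])

end Chernoff

lemma abs_sum_bern_mul_le_tails {n : ℕ} {x : ℝ} (hx₀ : 0 ≤ x) (hx₁ : x ≤ 1) {g : ℕ → ℝ}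
    {M α β : ℝ} (hM : ∀ l ≤ n, |g l| ≤ M) (hg : ∀ l : ℕ, α < l → (l : ℝ) < β → g l = 0) :
    |∑ l ∈ range (n + 1), bern n l x * g l|
      ≤ M * (∑ l ∈ range (n + 1) with ((l : ℕ) : ℝ) ≤ α, bern n l x
        + ∑ l ∈ range (n + 1) with β ≤ ((l : ℕ) : ℝ), bern n l x) := by
  have hM₀ : 0 ≤ M := (abs_nonneg _).trans (hM 0 n.zero_le)
  rw [Finset.sum_filter, Finset.sum_filter, ← Finset.sum_add_distrib, Finset.mul_sum]
  refine (Finset.abs_sum_le_sum_abs _ _).trans (Finset.sum_le_sum fun l hl => ?_)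
  have hb := bern_nonneg_s4 n l hx₀ hx₁
  have hgl := hM l (Nat.lt_succ_iff.1 (Finset.mem_range.1 hl))
  rw [abs_mul, abs_of_nonneg hb]
  by_cases hα : (l : ℝ) ≤ α
  · rw [if_pos hα]
    split_ifs <;> nlinarith
  · by_cases hβ : β ≤ (l : ℝ)
    · rw [if_neg hα, if_pos hβ]; nlinarith
    · rw [if_neg hα, if_neg hβ, hg l (not_le.1 hα) (not_le.1 hβ)]; simp

lemma Lop_sub_const (m k : ℕ) (μ : Measure ℝ) (f : ℝ → ℝ) (x c : ℝ) :
    Lop m k μ f x - c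
      = ∑ l ∈ range (m - k + 1), bern (m - k) l x * ((∫ t, f ((l + t) / m) ∂μ) - c) := by
  simp only [Lop, mul_sub, Finset.sum_sub_distrib, ← Finset.sum_mul, sum_bern_eq_one, one_mul]

lemma abs_integral_sub_le_of_ae {μ : Measure ℝ} [IsProbabilityMeasure μ] {g : ℝ → ℝ}
    (hg : AEStronglyMeasurable g μ) {c M : ℝ} (hM : ∀ᵐ t ∂μ, |g t - c| ≤ M) :
    |(∫ t, g t ∂μ) - c| ≤ M := by
  have hint : Integrable (fun t => g t - c) μ :=
    .of_bound (hg.sub aestronglyMeasurable_const) M (by simpa only [Real.norm_eq_abs] using hM)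
  have h := norm_integral_le_of_norm_le_const (f := fun t => g t - c) (C := M)
    (by simpa only [Real.norm_eq_abs] using hM)
  have hg_int : Integrable g μ :=
    (integrable_add_const_iff (c := -c)).1 (by simpa only [← sub_eq_add_neg] using hint)
  rwa [integral_sub hg_int (integrable_const c), integral_const, probReal_univ, one_smul,
    Real.norm_eq_abs, mul_one] at h

lemma ContinuousOn.aestronglyMeasurable_comp_of_ae_mem {μ : Measure ℝ} {f g : ℝ → ℝ} {s : Set ℝ}
    (hf : ContinuousOn f s) (hs : MeasurableSet s) (hg : Continuous g)
    (hgs : ∀ᵐ t ∂μ, g t ∈ s) : AEStronglyMeasurable (fun t => f (g t)) μ := by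
  have hmap : (μ.map g).restrict s = μ.map g :=
    Measure.restrict_eq_self_of_ae_mem ((ae_map_iff hg.aemeasurable hs).2 hgs)
  exact (hmap ▸ hf.aestronglyMeasurable hs).comp_aemeasurable hg.aemeasurable

lemma abs_sub_le_sSup {f : ℝ → ℝ} (hf : ContinuousOn f (Icc 0 1)) (c : ℝ) {u : ℝ}
    (hu : u ∈ Icc (0 : ℝ) 1) : |f u - c| ≤ sSup {v | ∃ t ∈ Icc (0 : ℝ) 1, v = |f t - c|} := by
  refine le_csSup ?_ ⟨u, hu, rfl⟩
  exact (isCompact_Icc.bddAbove_image (hf.sub continuousOn_const).abs).mono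
    (by rintro _ ⟨t, ht, rfl⟩; exact ⟨t, ht, rfl⟩)

lemma abs_integral_comp_sub_le {k m : ℕ} {μ : Measure ℝ} [IsProbabilityMeasure μ]
    (hμ : ∀ᵐ t : ℝ ∂μ, t ∈ Icc 0 (k : ℝ)) (hkm : k < m) {f : ℝ → ℝ}
    (hf : ContinuousOn f (Icc 0 1)) {l : ℕ} (hl : l ≤ m - k) {c M : ℝ}
    (hM : ∀ u ∈ Icc (0 : ℝ) 1, |f u - c| ≤ M) :
    |(∫ t, f ((l + t) / m) ∂μ) - c| ≤ M := by
  have hm : (0 : ℝ) < m := by exact_mod_cast (k.zero_le.trans_lt hkm)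
  have hlk : (l : ℝ) + k ≤ m := by exact_mod_cast (Nat.le_sub_iff_add_le hkm.le).1 hl
  have hmem : ∀ᵐ t : ℝ ∂μ, (l + t) / m ∈ Icc (0 : ℝ) 1 := by
    filter_upwards [hμ] with t ht
    exact ⟨by have := ht.1; positivity, (div_le_one hm).2 (by linarith [ht.2])⟩
  refine abs_integral_sub_le_of_ae (hf.aestronglyMeasurable_comp_of_ae_mem measurableSet_Icc
    (by fun_prop) hmem) ?_
  filter_upwards [hmem] with t ht using hM _ ht

lemma integral_comp_eq_of_lt_of_lt {k m : ℕ} {μ : Measure ℝ} [IsProbabilityMeasure μ]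
    (hμ : ∀ᵐ t : ℝ ∂μ, t ∈ Icc 0 (k : ℝ)) {f : ℝ → ℝ} {a b c : ℝ}
    (hconst : ∀ t ∈ Ioo a b, f t = c) {l : ℕ} (hal : m * a < l) (hlb : (l : ℝ) < m * b - k) :
    ∫ t, f ((l + t) / m) ∂μ = c := by
  have hm : (0 : ℝ) < m := by
    rcases m.eq_zero_or_pos with rfl | hm
    · norm_num at hal hlb; linarith [k.cast_nonneg (α := ℝ)]
    · exact_mod_cast hm
  rw [integral_congr_ae (g := fun _ => c), integral_const, probReal_univ, one_smul]
  filter_upwards [hμ] with t ht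
  exact hconst _ ⟨(lt_div_iff₀ hm).2 (by linarith [ht.1]), (div_lt_iff₀ hm).2 (by linarith [ht.2])⟩

theorem kantorovich_locally_constant_bound_general (k m : ℕ) (hkm : k < m)
    (μ : Measure ℝ) [IsProbabilityMeasure μ] (hμ : μ (Set.Icc (0:ℝ) k) = 1)
    (f : ℝ → ℝ) (hf : ContinuousOn f (Set.Icc 0 1))
    (a b c : ℝ) (ha : 0 < a) (hb : b < 1)
    (hconst : ∀ t ∈ Set.Ioo a b, f t = c)
    (x : ℝ) (hx : x ∈ Set.Ioo (m * a / (m - k)) ((m * b - k) / (m - k))) :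
    |Lop m k μ f x - f x| ≤
      (sSup {v | ∃ t ∈ Set.Icc (0:ℝ) 1, v = |f t - c|}) *
        (Real.exp (-(m - k : ℝ) * rfun x (m * a / (m - k))) +
          Real.exp (-(m - k : ℝ) * rfun x ((m * b - k) / (m - k)))) := by
  obtain ⟨hx₁, hx₂⟩ := hx
  have hn : ((m - k : ℕ) : ℝ) = m - k := Nat.cast_sub hkm.le
  have hn₀ : (0 : ℝ) < m - k := sub_pos.2 (by exact_mod_cast hkm)
  set θ₁ := m * a / (m - k : ℝ)
  set θ₂ := (m * b - k) / (m - k : ℝ)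
  have hnθ₁ : ((m - k : ℕ) : ℝ) * θ₁ = m * a := by rw [hn, mul_div_cancel₀ _ hn₀.ne']
  have hnθ₂ : ((m - k : ℕ) : ℝ) * θ₂ = m * b - k := by rw [hn, mul_div_cancel₀ _ hn₀.ne']
  have hθ₁ : 0 < θ₁ := div_pos (by nlinarith) hn₀
  have hθ₂ : θ₂ < 1 := (div_lt_one hn₀).2 (by nlinarith)
  have hfx : f x = c := hconst x
    ⟨((le_div_iff₀ hn₀).2 (by nlinarith)).trans_lt hx₁,
      hx₂.trans_le ((div_le_iff₀ hn₀).2 (by nlinarith))⟩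
  have hμ' : ∀ᵐ t ∂μ, t ∈ Icc (0 : ℝ) k :=
    (ae_mem_iff_measure_eq measurableSet_Icc.nullMeasurableSet).2 (by rw [hμ, measure_univ])
  rw [hfx, Lop_sub_const]
  refine (abs_sum_bern_mul_le_tails (hθ₁.trans hx₁).le (hx₂.trans hθ₂).le
    (α := (m - k : ℕ) * θ₁) (β := (m - k : ℕ) * θ₂)
    (fun l hl => abs_integral_comp_sub_le hμ' hkm hf hl fun u hu => abs_sub_le_sSup hf c hu)
    fun l hα hβ => ?_).trans ?_
  · rw [hnθ₁] at hα
    rw [hnθ₂] at hβ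
    rw [integral_comp_eq_of_lt_of_lt hμ' hconst hα hβ, sub_self]
  · gcongr
    · exact (abs_nonneg _).trans (abs_sub_le_sSup hf c (left_mem_Icc.2 zero_le_one))
    · simpa only [hn] using sum_bern_lowerTail_le_exp (m - k) hθ₁ hx₁.le (hx₂.trans hθ₂)
    · simpa only [hn] using sum_bern_upperTail_le_exp (m - k) (hθ₁.trans hx₁) hx₂.le hθ₂

theorem kantorovich_locally_constant_bound (k m : ℕ) (hkm : k < m)
    (μ : Measure ℝ) [IsProbabilityMeasure μ] (hμ : μ (Set.Icc (0:ℝ) k) = 1)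
    (f : ℝ → ℝ) (hf : ContinuousOn f (Set.Icc 0 1))
    (a b c : ℝ) (ha : 0 < a) (hab : a < b) (hb : b < 1)
    (hconst : ∀ t ∈ Set.Ioo a b, f t = c)
    (x : ℝ) (hx : x ∈ Set.Ioo (m * a / (m - k)) ((m * b - k) / (m - k))) :
    |Lop m k μ f x - f x| ≤
      (sSup {v | ∃ t ∈ Set.Icc (0:ℝ) 1, v = |f t - c|}) *
        (Real.exp (-(m - k : ℝ) * rfun x (m * a / (m - k))) +
          Real.exp (-(m - k : ℝ) * rfun x ((m * b - k) / (m - k)))) :=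
  kantorovich_locally_constant_bound_general k m hkm μ hμ f hf a b c ha hb hconst x hx
end

section
/- Let X₁, …, X_n be i.i.d. random variables uniformly distributed on [0,1], so that F(x) = x on [0,1]. Then for every δ > 0: P( sup_{x∈[0,1]} |B_2(Y_n;x) − x| > δ ) ≤ 2 e^{−8nδ²}, and P( sup_{x∈[0,1]} |B_2^{(1)}(Y_n;x) − 1| > δ ) ≤ 2 e^{−nδ²/8}. -/
/-! Every `X_r` lies in `(0, 1]` almost surely, so `Y_n(0) = 0` and `Y_n(1) = 1`, and then
`B_2(Y_n; x) = x + 2 (Y_n(1/2) - 1/2) x (1 - x)`. On `[0, 1]` we have `x (1 - x) ≤ 1/4` and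
`|1 - 2x| ≤ 1`, so both deviations are controlled by `|Y_n(1/2) - 1/2|` alone. The quantity
`n (Y_n(1/2) - 1/2)` is a sum of `n` independent centred indicators with values in an interval of
length one, hence sub-Gaussian with variance proxy `n / 4`, and Hoeffding's inequality gives the
bounds. -/

open Set Finset MeasureTheory ProbabilityTheory

/-- Empirical distribution function `Y_n(x) = (1/n) Σ_r 1{X_r ≤ x}`. -/
noncomputable def empY {Ω : Type*} (n : ℕ) (X : Fin n → Ω → ℝ) (x : ℝ) (ω : Ω) : ℝ :=
  (1 / n : ℝ) * ∑ r, (if X r ω ≤ x then (1 : ℝ) else 0)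

/-- Random Bernstein polynomial `B_m(Y_n;x)`, as a function of `x` for each `ω`. -/
noncomputable def BY {Ω : Type*} (m n : ℕ) (X : Fin n → Ω → ℝ) (ω : Ω) (x : ℝ) : ℝ :=
  ∑ k ∈ Finset.range (m + 1), empY n X ((k : ℝ) / m) ω * bern m k x

lemma ProbabilityTheory.HasSubgaussianMGF.measureReal_abs_ge_le {Ω : Type*}
    [MeasurableSpace Ω] {μ : Measure Ω} {X : Ω → ℝ} {c : NNReal}
    (h : HasSubgaussianMGF X c μ) {ε : ℝ} (hε : 0 ≤ ε) :
    μ.real {ω | ε ≤ |X ω|} ≤ 2 * Real.exp (-ε ^ 2 / (2 * c)) := by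
  have hsplit : {ω | ε ≤ |X ω|} = {ω | ε ≤ X ω} ∪ {ω | ε ≤ (-X) ω} := by
    ext ω
    simp [le_abs]
  calc μ.real {ω | ε ≤ |X ω|}
      ≤ μ.real {ω | ε ≤ X ω} + μ.real {ω | ε ≤ (-X) ω} := hsplit ▸ measureReal_union_le _ _
    _ ≤ Real.exp (-ε ^ 2 / (2 * c)) + Real.exp (-ε ^ 2 / (2 * c)) :=
        add_le_add (h.measure_ge_le hε) (h.neg.measure_ge_le hε)
    _ = 2 * Real.exp (-ε ^ 2 / (2 * c)) := by ring

section EmpiricalDistribution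

variable {Ω : Type*} {n : ℕ} {X : Fin n → Ω → ℝ} {x : ℝ} {ω : Ω}

lemma empY_eq_zero_of_forall_lt (h : ∀ r, x < X r ω) : empY n X x ω = 0 := by
  simp [empY, fun r => not_le.mpr (h r)]

lemma empY_eq_one_of_forall_le (hn : n ≠ 0) (h : ∀ r, X r ω ≤ x) : empY n X x ω = 1 := by
  simp [empY, h, hn]

lemma empY_sub_eq (hn : n ≠ 0) (p : ℝ) :
    empY n X x ω - p = (∑ r, ((if X r ω ≤ x then (1 : ℝ) else 0) - p)) / n := by
  simp only [empY, Finset.sum_sub_distrib, Finset.sum_const, Finset.card_univ, Fintype.card_fin,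
    nsmul_eq_mul]
  field_simp

end EmpiricalDistribution

section QuadraticBernstein

variable {Ω : Type*} {n : ℕ} {X : Fin n → Ω → ℝ} {ω : Ω}

lemma BY_two_eq (h0 : empY n X 0 ω = 0) (h1 : empY n X 1 ω = 1) :
    BY 2 n X ω = fun x => x + 2 * (empY n X (1 / 2) ω - 1 / 2) * (x * (1 - x)) := by
  funext x
  simp only [BY, Finset.sum_range_succ, Finset.sum_range_zero, bern]
  norm_num [h0, h1]
  ring

lemma deriv_BY_two (h0 : empY n X 0 ω = 0) (h1 : empY n X 1 ω = 1) (x : ℝ) :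
    deriv (BY 2 n X ω) x = 1 + 2 * (empY n X (1 / 2) ω - 1 / 2) * (1 - 2 * x) := by
  set a := 2 * (empY n X (1 / 2) ω - 1 / 2)
  have h : HasDerivAt (fun y => y + a * (y * (1 - y))) (1 + a * (1 * (1 - x) + x * (-1))) x :=
    (hasDerivAt_id' x).add (((hasDerivAt_id' x).mul ((hasDerivAt_id' x).const_sub 1)).const_mul a)
  rw [BY_two_eq h0 h1, h.deriv]
  ring

lemma iSup_abs_BY_two_sub_le (h0 : empY n X 0 ω = 0) (h1 : empY n X 1 ω = 1) :
    (⨆ x : Icc (0 : ℝ) 1, |BY 2 n X ω x - x|) ≤ |empY n X (1 / 2) ω - 1 / 2| / 2 := by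
  have : Nonempty (Icc (0 : ℝ) 1) := ⟨⟨0, by norm_num⟩⟩
  refine ciSup_le fun ⟨x, hx0, hx1⟩ => ?_
  have hx : 0 ≤ x * (1 - x) := mul_nonneg hx0 (by linarith)
  calc |BY 2 n X ω x - x| = 2 * |empY n X (1 / 2) ω - 1 / 2| * (x * (1 - x)) := by
        rw [BY_two_eq h0 h1, add_sub_cancel_left, abs_mul, abs_mul, abs_two, abs_of_nonneg hx]
    _ ≤ 2 * |empY n X (1 / 2) ω - 1 / 2| * (1 / 4) := by
        gcongr; nlinarith [sq_nonneg (x - 1 / 2)]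
    _ = _ := by ring

lemma iSup_abs_deriv_BY_two_sub_le (h0 : empY n X 0 ω = 0) (h1 : empY n X 1 ω = 1) :
    (⨆ x : Icc (0 : ℝ) 1, |deriv (BY 2 n X ω) x - 1|) ≤ 2 * |empY n X (1 / 2) ω - 1 / 2| := by
  have : Nonempty (Icc (0 : ℝ) 1) := ⟨⟨0, by norm_num⟩⟩
  refine ciSup_le fun ⟨x, hx0, hx1⟩ => ?_
  calc |deriv (BY 2 n X ω) x - 1| = 2 * |empY n X (1 / 2) ω - 1 / 2| * |1 - 2 * x| := by
        rw [deriv_BY_two h0 h1, add_sub_cancel_left, abs_mul, abs_mul, abs_two]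
    _ ≤ 2 * |empY n X (1 / 2) ω - 1 / 2| * 1 := by
        gcongr; exact abs_le.mpr ⟨by linarith, by linarith⟩
    _ = _ := mul_one _

end QuadraticBernstein

lemma hasSubgaussianMGF_ite_le_sub {Ω : Type*} [MeasurableSpace Ω] {P : Measure Ω}
    [IsProbabilityMeasure P] {Y : Ω → ℝ} (hY : Measurable Y) {x p : ℝ}
    (hF : P.real {ω | Y ω ≤ x} = p) :
    HasSubgaussianMGF (fun ω => (if Y ω ≤ x then (1 : ℝ) else 0) - p) (1 / 4) P := by
  have hA : MeasurableSet {ω | Y ω ≤ x} := hY measurableSet_Iic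
  have hind : (fun ω => if Y ω ≤ x then (1 : ℝ) else 0) = {ω | Y ω ≤ x}.indicator 1 := by
    ext ω; simp [Set.indicator_apply]
  have hint : Integrable (fun ω => if Y ω ≤ x then (1 : ℝ) else 0) P :=
    hind ▸ (integrable_const 1).indicator hA
  have hmean : ∫ ω, ((if Y ω ≤ x then (1 : ℝ) else 0) - p) ∂P = 0 := by
    rw [integral_sub hint (integrable_const p), hind, integral_indicator_one hA, hF]
    simp
  have hIcc : ∀ ω, (if Y ω ≤ x then (1 : ℝ) else 0) - p ∈ Icc (-p) (1 - p) := fun ω => by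
    split_ifs <;> constructor <;> linarith
  have hmeas : Measurable fun ω => (if Y ω ≤ x then (1 : ℝ) else 0) - p :=
    (measurable_const.ite hA measurable_const).sub_const p
  convert hasSubgaussianMGF_of_mem_Icc_of_integral_eq_zero hmeas.aemeasurable
    (ae_of_all _ hIcc) hmean using 1
  norm_num

lemma measure_abs_empY_sub_ge_le {Ω : Type*} [MeasurableSpace Ω] {P : Measure Ω}
    [IsProbabilityMeasure P] {n : ℕ} (hn : n ≠ 0) {X : Fin n → Ω → ℝ}
    (hmeas : ∀ r, Measurable (X r)) (hindep : iIndepFun X P) {x p : ℝ}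
    (hF : ∀ r, P.real {ω | X r ω ≤ x} = p) {ε : ℝ} (hε : 0 ≤ ε) :
    P {ω | ε ≤ |empY n X x ω - p|} ≤ ENNReal.ofReal (2 * Real.exp (-(2 * n * ε ^ 2))) := by
  set g : ℝ → ℝ := fun y => (if y ≤ x then 1 else 0) - p
  have hg : Measurable g := (measurable_const.ite measurableSet_Iic measurable_const).sub_const p
  have hsum := (HasSubgaussianMGF.sum_of_iIndepFun (hindep.comp (fun _ => g) fun _ => hg)
    (s := univ) fun r _ => hasSubgaussianMGF_ite_le_sub (hmeas r) (hF r)).measureReal_abs_ge_le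
    (ε := n * ε) (by positivity)
  have hn' : (0 : ℝ) < n := by positivity
  have hevent : {ω | ε ≤ |empY n X x ω - p|} = {ω | n * ε ≤ |∑ r, (g ∘ X r) ω|} := by
    ext ω
    simp only [mem_ofPred_eq, empY_sub_eq hn, abs_div, Nat.abs_cast, le_div_iff₀ hn', mul_comm ε]
    rfl
  rw [hevent, ← ofReal_measureReal]
  refine ENNReal.ofReal_le_ofReal (hsum.trans_eq ?_)
  simp only [Finset.sum_const, Finset.card_univ, Fintype.card_fin, nsmul_eq_mul]
  push_cast
  congr 2
  field_simp
  ring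

theorem uniform_bands
    {Ω : Type*} [MeasurableSpace Ω] (P : Measure Ω) [IsProbabilityMeasure P]
    (n : ℕ) (hn : 2 ≤ n) (X : Fin n → Ω → ℝ)
    (hmeas : ∀ r, Measurable (X r))
    (hindep : iIndepFun X P)
    (hval : ∀ r ω, X r ω ∈ Set.Icc (0:ℝ) 1)
    (hunif : ∀ r, ∀ x ∈ Set.Icc (0:ℝ) 1, (P {ω | X r ω ≤ x}).toReal = x)
    (δ : ℝ) (hδ : 0 < δ) :
    P {ω | (⨆ x : Set.Icc (0:ℝ) 1, |BY 2 n X ω x - (x : ℝ)|) > δ} ≤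
        ENNReal.ofReal (2 * Real.exp (-(8 * n * δ ^ 2))) ∧
      P {ω | (⨆ x : Set.Icc (0:ℝ) 1, |deriv (fun y => BY 2 n X ω y) x - 1|) > δ} ≤
        ENNReal.ofReal (2 * Real.exp (-(n * δ ^ 2 / 8))) := by
  have hn0 : n ≠ 0 := by omega
  have hY1 : ∀ ω, empY n X 1 ω = 1 := fun ω =>
    empY_eq_one_of_forall_le hn0 fun r => (hval r ω).2
  have hY0 : ∀ᵐ ω ∂P, empY n X 0 ω = 0 := by
    have hpos : ∀ r, ∀ᵐ ω ∂P, 0 < X r ω := fun r => by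
      rw [ae_iff]
      simpa only [not_lt] using
        (measureReal_eq_zero_iff (measure_ne_top _ _)).1 (hunif r 0 ⟨le_rfl, zero_le_one⟩)
    filter_upwards [ae_all_iff.2 hpos] with ω h using empY_eq_zero_of_forall_lt h
  have hdev : ∀ ε, 0 ≤ ε → P {ω | ε ≤ |empY n X (1 / 2) ω - 1 / 2|} ≤
      ENNReal.ofReal (2 * Real.exp (-(2 * n * ε ^ 2))) := fun ε =>
    measure_abs_empY_sub_ge_le hn0 hmeas hindep fun r => hunif r _ ⟨by norm_num, by norm_num⟩
  constructor
  · calc _ ≤ P {ω | 2 * δ ≤ |empY n X (1 / 2) ω - 1 / 2|} := by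
          refine measure_mono_ae ?_
          filter_upwards [hY0] with ω h0 (hω : δ < _)
          have := iSup_abs_BY_two_sub_le h0 (hY1 ω)
          show 2 * δ ≤ _
          linarith
      _ ≤ _ := hdev _ (by positivity)
      _ = _ := by ring_nf
  · calc _ ≤ P {ω | δ / 2 ≤ |empY n X (1 / 2) ω - 1 / 2|} := by
          refine measure_mono_ae ?_
          filter_upwards [hY0] with ω h0 (hω : δ < _)
          have := iSup_abs_deriv_BY_two_sub_le h0 (hY1 ω)
          show δ / 2 ≤ _
          linarith
      _ ≤ _ := hdev _ (by positivity)
      _ ≤ _ := by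
          gcongr
          nlinarith [sq_nonneg δ]
end

section
/- Let F_β(x) = x^β on [0,1] for β > 0, and let 0 ≤ h ≤ 1/2. If 0 < β ≤ 2, then ω₂(F_β; h) = |2^β − 2|·h^β. If β > 2, then ω₂(F_β; h) ≤ β(β−1)·h². -/
/-!
Write `Δ_t f(x) = f(x+t) - 2 f(x) + f(x-t)`, so that `∂ₓ Δ_t f = Δ_t f'`. For `f(x) = x^β` with
`0 < β ≤ 2`, the derivative `β x^(β-1)` is convex when `f` is concave and concave when `f` is
convex. Hence on `x ≥ t` the difference `Δ_t f(x)` keeps one sign while moving towards `0`, so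
`|Δ_t f|` is largest at `x = t`, where it equals `|2^β - 2| t^β`; for `t = h` this point is
admissible because `2h ≤ 1`. For `β > 2`, the bound `f'' ≤ β(β-1)` on `[0,1]` makes
`β(β-1) x²/2 - x^β` convex there, and `Δ_t (x²/2) = t²` turns this into `Δ_t f ≤ β(β-1) t²`.
-/

open Set Finset

def secondDiff (f : ℝ → ℝ) (x t : ℝ) : ℝ :=
  f (x + t) - 2 * f x + f (x - t)

lemma secondDiff_neg (f : ℝ → ℝ) (x t : ℝ) : secondDiff (-f) x t = -secondDiff f x t := by
  simp only [secondDiff, Pi.neg_apply]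
  ring

lemma ConvexOn.secondDiff_nonneg {s : Set ℝ} {f : ℝ → ℝ} {x t : ℝ} (hf : ConvexOn ℝ s f)
    (hl : x - t ∈ s) (hr : x + t ∈ s) : 0 ≤ secondDiff f x t := by
  have h := hf.2 hl hr (by norm_num : (0 : ℝ) ≤ 1 / 2) (by norm_num : (0 : ℝ) ≤ 1 / 2)
    (by norm_num)
  rw [smul_eq_mul, smul_eq_mul, smul_eq_mul, smul_eq_mul,
    show 1 / 2 * (x - t) + 1 / 2 * (x + t) = x by ring] at h
  unfold secondDiff
  linarith

lemma ConcaveOn.secondDiff_nonpos {s : Set ℝ} {f : ℝ → ℝ} {x t : ℝ} (hf : ConcaveOn ℝ s f)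
    (hl : x - t ∈ s) (hr : x + t ∈ s) : secondDiff f x t ≤ 0 := by
  have h := hf.neg.secondDiff_nonneg hl hr
  rw [secondDiff_neg] at h
  linarith

lemma secondDiff_le_of_convexOn_sub_sq {s : Set ℝ} {f : ℝ → ℝ} {c x t : ℝ}
    (hf : ConvexOn ℝ s fun u => c / 2 * u ^ 2 - f u) (hl : x - t ∈ s) (hr : x + t ∈ s) :
    secondDiff f x t ≤ c * t ^ 2 := by
  have h := hf.secondDiff_nonneg hl hr
  unfold secondDiff at h ⊢
  linarith

lemma hasDerivAt_secondDiff {f f' : ℝ → ℝ} {x t : ℝ} (hr : HasDerivAt f (f' (x + t)) (x + t))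
    (hm : HasDerivAt f (f' x) x) (hl : HasDerivAt f (f' (x - t)) (x - t)) :
    HasDerivAt (fun y => secondDiff f y t) (secondDiff f' x t) x :=
  ((hr.comp_add_const x t).sub (hm.const_mul 2)).add (hl.comp_sub_const x t)

lemma antitoneOn_secondDiff {f f' : ℝ → ℝ} {t : ℝ} (ht : 0 ≤ t) (hf : ContinuousOn f (Ici 0))
    (hderiv : ∀ u, 0 < u → HasDerivAt f (f' u) u) (hf' : ConcaveOn ℝ (Ioi 0) f') :
    AntitoneOn (fun x => secondDiff f x t) (Ici t) := by
  have hd : ∀ x ∈ interior (Ici t),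
      HasDerivAt (fun y => secondDiff f y t) (secondDiff f' x t) x := by
    rw [interior_Ici]
    intro x (hx : t < x)
    exact hasDerivAt_secondDiff (hderiv _ (by linarith)) (hderiv _ (by linarith))
      (hderiv _ (by linarith))
  have hcont : ContinuousOn (fun y => secondDiff f y t) (Ici t) := by
    have shift : ∀ c, -t ≤ c → ContinuousOn (fun y => f (y + c)) (Ici t) := fun c hc =>
      hf.comp (by fun_prop) fun y (hy : t ≤ y) => show 0 ≤ y + c by linarith
    refine (((shift t (by linarith)).sub ((shift 0 (by linarith)).const_smul (2 : ℝ))).add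
      (shift (-t) le_rfl)).congr fun y _ => ?_
    simp only [secondDiff, Pi.add_apply, Pi.sub_apply, Pi.smul_apply, smul_eq_mul, add_zero,
      ← sub_eq_add_neg]
  refine antitoneOn_of_deriv_nonpos (convex_Ici t) hcont
    (fun x hx => (hd x hx).differentiableAt.differentiableWithinAt) fun x hx => ?_
  rw [(hd x hx).deriv]
  rw [interior_Ici] at hx
  exact hf'.secondDiff_nonpos (show 0 < x - t by linarith [mem_Ioi.1 hx])
    (show 0 < x + t by linarith [mem_Ioi.1 hx])

lemma monotoneOn_secondDiff {f f' : ℝ → ℝ} {t : ℝ} (ht : 0 ≤ t) (hf : ContinuousOn f (Ici 0))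
    (hderiv : ∀ u, 0 < u → HasDerivAt f (f' u) u) (hf' : ConvexOn ℝ (Ioi 0) f') :
    MonotoneOn (fun x => secondDiff f x t) (Ici t) := by
  have h := antitoneOn_secondDiff ht hf.neg (fun u hu => (hderiv u hu).neg) hf'.neg
  intro a ha b hb hab
  have := h ha hb hab
  simp only [secondDiff_neg] at this
  linarith

lemma convexOn_rpow_of_nonpos {p : ℝ} (hp : p ≤ 0) : ConvexOn ℝ (Ioi 0) fun x : ℝ => x ^ p := by
  refine convexOn_of_hasDerivWithinAt2_nonneg (convex_Ioi 0) (f' := fun x => p * x ^ (p - 1))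
    (f'' := fun x => p * ((p - 1) * x ^ (p - 1 - 1)))
    (fun x hx => (Real.continuousAt_rpow_const x p (Or.inl (ne_of_gt hx))).continuousWithinAt)
    ?_ ?_ ?_ <;> rw [interior_Ioi] <;> intro x (hx : 0 < x)
  · exact (Real.hasDerivAt_rpow_const (Or.inl hx.ne')).hasDerivWithinAt
  · exact ((Real.hasDerivAt_rpow_const (Or.inl hx.ne')).const_mul p).hasDerivWithinAt
  · have := Real.rpow_nonneg hx.le (p - 1 - 1)
    have : 0 ≤ p * (p - 1) := mul_nonneg_of_nonpos_of_nonpos hp (by linarith)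
    rw [← mul_assoc]
    positivity

lemma secondDiff_rpow_self {β t : ℝ} (hβ : β ≠ 0) (ht : 0 ≤ t) :
    secondDiff (· ^ β) t t = (2 ^ β - 2) * t ^ β := by
  simp only [secondDiff, sub_self, Real.zero_rpow hβ, ← two_mul,
    Real.mul_rpow zero_le_two ht]
  ring

lemma abs_secondDiff_rpow_le {β t x : ℝ} (hβ : 0 < β) (hβ2 : β ≤ 2) (ht : 0 ≤ t) (hx : t ≤ x) :
    |secondDiff (· ^ β) x t| ≤ |2 ^ β - 2| * t ^ β := by
  have hderiv : ∀ u : ℝ, 0 < u → HasDerivAt (· ^ β) (β * u ^ (β - 1)) u :=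
    fun u hu => Real.hasDerivAt_rpow_const (Or.inl hu.ne')
  have hcont : ContinuousOn (· ^ β) (Ici (0 : ℝ)) :=
    (Real.continuous_rpow_const hβ.le).continuousOn
  have hmem : ∀ y, t ≤ y → y - t ∈ Ici (0 : ℝ) ∧ y + t ∈ Ici (0 : ℝ) :=
    fun y hy => ⟨show 0 ≤ y - t by linarith, show 0 ≤ y + t by linarith⟩
  rw [← abs_of_nonneg (Real.rpow_nonneg ht β), ← abs_mul, ← secondDiff_rpow_self hβ.ne' ht]
  rcases le_total β 1 with hβ1 | hβ1
  · have hconc := Real.concaveOn_rpow hβ.le hβ1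
    refine abs_le_abs_of_nonpos (hconc.secondDiff_nonpos (hmem x hx).1 (hmem x hx).2) ?_
    refine monotoneOn_secondDiff ht hcont hderiv ?_ self_mem_Ici hx hx
    simpa only [smul_eq_mul] using (convexOn_rpow_of_nonpos (by linarith)).smul hβ.le
  · have hconv := convexOn_rpow hβ1
    refine abs_le_abs_of_nonneg (hconv.secondDiff_nonneg (hmem x hx).1 (hmem x hx).2) ?_
    refine antitoneOn_secondDiff ht hcont hderiv ?_ self_mem_Ici hx hx
    simpa only [smul_eq_mul] using ((Real.concaveOn_rpow (by linarith) (by linarith)).subset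
      Ioi_subset_Ici_self (convex_Ioi 0)).smul hβ.le

lemma convexOn_sq_sub_rpow {β : ℝ} (hβ : 2 ≤ β) :
    ConvexOn ℝ (Set.Icc 0 1) fun u : ℝ => β * (β - 1) / 2 * u ^ 2 - u ^ β := by
  refine convexOn_of_hasDerivWithinAt2_nonneg (convex_Icc 0 1)
    (f' := fun u => β * (β - 1) * u - β * u ^ (β - 1))
    (f'' := fun u => β * (β - 1) * 1 - β * ((β - 1) * u ^ (β - 1 - 1)))
    ((continuous_const.mul (continuous_pow 2)).sub
      (Real.continuous_rpow_const (by linarith))).continuousOn ?_ ?_ ?_ <;>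
    rw [interior_Icc] <;> rintro u ⟨hu0, hu1⟩
  · refine (((hasDerivAt_pow 2 u).const_mul (β * (β - 1) / 2)).sub
      (Real.hasDerivAt_rpow_const (Or.inl hu0.ne'))).hasDerivWithinAt.congr_deriv ?_
    push_cast
    ring
  · exact (((hasDerivAt_id u).const_mul (β * (β - 1))).sub
      ((Real.hasDerivAt_rpow_const (Or.inl hu0.ne')).const_mul β)).hasDerivWithinAt
  · have hpow : u ^ (β - 1 - 1) ≤ 1 := Real.rpow_le_one hu0.le hu1.le (by linarith)
    have hββ : 0 ≤ β * (β - 1) := mul_nonneg (by linarith) (by linarith)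
    nlinarith

lemma abs_secondDiff_rpow_le_mul_sq {β t x : ℝ} (hβ : 2 ≤ β) (ht : 0 ≤ t) (hl : 0 ≤ x - t)
    (hr : x + t ≤ 1) :
    |secondDiff (· ^ β) x t| ≤ β * (β - 1) * t ^ 2 := by
  rw [abs_of_nonneg ((convexOn_rpow (by linarith)).secondDiff_nonneg (mem_Ici.2 hl)
    (mem_Ici.2 (by linarith)))]
  exact secondDiff_le_of_convexOn_sub_sq (convexOn_sq_sub_rpow hβ) ⟨hl, by linarith⟩
    ⟨by linarith, hr⟩

lemma omega2_le {f : ℝ → ℝ} {δ B : ℝ} (hB : 0 ≤ B)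
    (hbound : ∀ x t, 0 ≤ t → t ≤ δ → x - t ∈ Set.Icc (0 : ℝ) 1 → x + t ∈ Set.Icc (0 : ℝ) 1 →
      |secondDiff f x t| ≤ B) :
    omega2 f δ ≤ B :=
  Real.sSup_le (by rintro _ ⟨x, t, ht, htδ, hl, hr, rfl⟩; exact hbound x t ht htδ hl hr) hB

lemma omega2_eq {f : ℝ → ℝ} {δ B : ℝ} (x₀ t₀ : ℝ) (ht₀ : 0 ≤ t₀) (ht₀δ : t₀ ≤ δ)
    (hl : x₀ - t₀ ∈ Set.Icc (0 : ℝ) 1) (hr : x₀ + t₀ ∈ Set.Icc (0 : ℝ) 1)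
    (hattain : |secondDiff f x₀ t₀| = B)
    (hbound : ∀ x t, 0 ≤ t → t ≤ δ → x - t ∈ Set.Icc (0 : ℝ) 1 → x + t ∈ Set.Icc (0 : ℝ) 1 →
      |secondDiff f x t| ≤ B) :
    omega2 f δ = B :=
  IsGreatest.csSup_eq ⟨⟨x₀, t₀, ht₀, ht₀δ, hl, hr, hattain.symm⟩,
    by rintro _ ⟨x, t, ht, htδ, hl, hr, rfl⟩; exact hbound x t ht htδ hl hr⟩

theorem second_modulus_of_power (β h : ℝ) (hβ : 0 < β) (hh0 : 0 ≤ h) (hh : h ≤ 1 / 2) :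
    (β ≤ 2 → omega2 (fun x => x ^ β) h = |(2:ℝ) ^ β - 2| * h ^ β) ∧
      (2 < β → omega2 (fun x => x ^ β) h ≤ β * (β - 1) * h ^ 2) := by
  refine ⟨fun hβ2 => ?_, fun hβ2 => ?_⟩
  · refine omega2_eq h h hh0 le_rfl ⟨by simp, by simp⟩ ⟨by linarith, by linarith⟩ ?_ ?_
    · rw [secondDiff_rpow_self hβ.ne' hh0, abs_mul, abs_of_nonneg (Real.rpow_nonneg hh0 β)]
    · rintro x t ht htδ ⟨hl, -⟩ -
      calc |secondDiff (· ^ β) x t| ≤ |2 ^ β - 2| * t ^ β :=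
            abs_secondDiff_rpow_le hβ hβ2 ht (by linarith)
        _ ≤ |2 ^ β - 2| * h ^ β := by gcongr
  · have hβ1 : 0 ≤ β - 1 := by linarith
    refine omega2_le (by positivity) ?_
    rintro x t ht htδ ⟨hl, -⟩ ⟨-, hr⟩
    calc |secondDiff (· ^ β) x t| ≤ β * (β - 1) * t ^ 2 :=
          abs_secondDiff_rpow_le_mul_sq hβ2.le ht hl hr
      _ ≤ β * (β - 1) * h ^ 2 := by gcongr
end

section
/- Let n ≥ 1 and r ≥ 0 be integers, d > 0, and let Z₁, …, Z_n be i.i.d. random vectors with values in ℝ^{r+1} (write Z_j = (Z_j(0), …, Z_j(r))) such that E[Z₁(i)] = 0 and |Z_j(i)| ≤ d almost surely for every i and j. Let α₀, …, α_r ≥ 0 with Σ_{i=0}^r α_i = 1, set W = Σ_{j=1}^n Σ_{i=0}^r α_i Z_j(i), and set v = Σ_{i=0}^r α_i E[Z₁(i)²]. Then for every c ≥ v/d² and every ε > 0, P( |W| ≥ n·c·d·ε ) ≤ 2 e^{−n·c·τ(ε)}. -/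
open Set Finset MeasureTheory ProbabilityTheory

/-- `τ(ε) = (1+ε) log(1+ε) - ε`. -/
noncomputable def tau (ε : ℝ) : ℝ := (1 + ε) * Real.log (1 + ε) - ε

/-! This is Bennett's inequality for `W = ∑ⱼ Xⱼ` with `Xⱼ = ∑ᵢ αᵢ Zⱼ(i)`: each `Xⱼ`
is centred, bounded by `d`, and by Jensen `E[Xⱼ²] ≤ v ≤ c d²`. Comparing power series term by
term, `e^{tx} ≤ 1 + tx + (x/d)² (e^{td} - 1 - td)` for `|x| ≤ d` and `t ≥ 0`, so taking
expectations `E[e^{tXⱼ}] ≤ exp (c (e^{td} - 1 - td))`. Independence and the Chernoff bound at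
`t = log (1 + ε) / d` give `P(W ≥ n c d ε) ≤ e^{-n c τ(ε)}`, and the same holds for `-W`. -/

lemma Real.exp_sub_one_sub_eq_tsum (y : ℝ) :
    Real.exp y - 1 - y = ∑' k : ℕ, y ^ (k + 2) / (k + 2).factorial := by
  rw [Real.exp_eq_exp_ℝ, NormedSpace.exp_eq_tsum_div]
  dsimp only
  rw [← (Real.summable_pow_div_factorial y).sum_add_tsum_nat_add 2, sum_range_succ, sum_range_one]
  simp only [pow_zero, pow_one, Nat.factorial_zero, Nat.factorial_one, Nat.cast_one, div_one]
  ring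

lemma Real.exp_mul_sub_one_sub_le {d t x : ℝ} (hd : 0 < d) (ht : 0 ≤ t) (hx : |x| ≤ d) :
    Real.exp (t * x) - 1 - t * x ≤ x ^ 2 / d ^ 2 * (Real.exp (t * d) - 1 - t * d) := by
  have hsummable (y : ℝ) : Summable fun k : ℕ => y ^ (k + 2) / (k + 2).factorial :=
    (summable_nat_add_iff 2).mpr (Real.summable_pow_div_factorial y)
  rw [exp_sub_one_sub_eq_tsum, exp_sub_one_sub_eq_tsum, ← tsum_mul_left]
  refine (hsummable _).tsum_le_tsum (fun k => ?_) ((hsummable _).mul_left _)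
  have hpow : x ^ (k + 2) ≤ x ^ 2 * d ^ k :=
    calc x ^ (k + 2) ≤ |x| ^ (k + 2) := (le_abs_self _).trans_eq (abs_pow x _)
      _ = x ^ 2 * |x| ^ k := by rw [pow_add, sq_abs, mul_comm]
      _ ≤ x ^ 2 * d ^ k := by gcongr
  calc (t * x) ^ (k + 2) / (k + 2).factorial
      = t ^ (k + 2) * x ^ (k + 2) / (k + 2).factorial := by rw [mul_pow]
    _ ≤ t ^ (k + 2) * (x ^ 2 * d ^ k) / (k + 2).factorial := by gcongr
    _ = x ^ 2 / d ^ 2 * ((t * d) ^ (k + 2) / (k + 2).factorial) := by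
        field_simp
        ring

lemma abs_sum_mul_le_of_sum_eq_one {ι : Type*} [Fintype ι] {a x : ι → ℝ} {d : ℝ}
    (ha : ∀ i, 0 ≤ a i) (hsum : ∑ i, a i = 1) (hx : ∀ i, |x i| ≤ d) :
    |∑ i, a i * x i| ≤ d :=
  calc |∑ i, a i * x i| ≤ ∑ i, a i * |x i| := by
        simpa only [abs_mul, abs_of_nonneg (ha _)] using
          abs_sum_le_sum_abs (fun i => a i * x i) univ
    _ ≤ ∑ i, a i * d := sum_le_sum fun i _ => mul_le_mul_of_nonneg_left (hx i) (ha i)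
    _ = d := by rw [← sum_mul, hsum, one_mul]

lemma sq_sum_mul_le_sum_mul_sq {ι : Type*} [Fintype ι] {a : ι → ℝ} (x : ι → ℝ)
    (ha : ∀ i, 0 ≤ a i) (hsum : ∑ i, a i = 1) :
    (∑ i, a i * x i) ^ 2 ≤ ∑ i, a i * x i ^ 2 := by
  simpa only [smul_eq_mul] using
    even_two.convexOn_pow.map_sum_le (fun i _ => ha i) hsum (p := x) fun i _ => mem_univ (x i)

section Bennett

variable {Ω : Type*} [MeasurableSpace Ω] {P : Measure Ω}

lemma integrable_of_abs_le [IsFiniteMeasure P] {X : Ω → ℝ} (hX : AEMeasurable X P) {d : ℝ}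
    (hb : ∀ᵐ ω ∂P, |X ω| ≤ d) : Integrable X P :=
  .of_bound hX.aestronglyMeasurable d (by simpa only [Real.norm_eq_abs] using hb)

lemma integrable_sq_of_abs_le [IsFiniteMeasure P] {X : Ω → ℝ} (hX : AEMeasurable X P) {d : ℝ}
    (hb : ∀ᵐ ω ∂P, |X ω| ≤ d) : Integrable (fun ω => X ω ^ 2) P :=
  integrable_of_abs_le (hX.pow_const 2) (d := d ^ 2) <| by
    filter_upwards [hb] with ω h
    rw [abs_pow]
    exact pow_le_pow_left₀ (abs_nonneg _) h 2

lemma integral_sq_sum_mul_le {ι : Type*} [Fintype ι] {Y : Ω → ι → ℝ}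
    (hY : ∀ i, Integrable (fun ω => Y ω i ^ 2) P) {a : ι → ℝ} (ha : ∀ i, 0 ≤ a i)
    (hsum : ∑ i, a i = 1) :
    ∫ ω, (∑ i, a i * Y ω i) ^ 2 ∂P ≤ ∑ i, a i * ∫ ω, Y ω i ^ 2 ∂P := by
  have hint i : Integrable (fun ω => a i * Y ω i ^ 2) P := (hY i).const_mul _
  calc ∫ ω, (∑ i, a i * Y ω i) ^ 2 ∂P ≤ ∫ ω, ∑ i, a i * Y ω i ^ 2 ∂P :=
        integral_mono_of_nonneg (.of_forall fun _ => sq_nonneg _)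
          (integrable_finsetSum _ fun i _ => hint i)
          (.of_forall fun ω => sq_sum_mul_le_sum_mul_sq _ ha hsum)
    _ = ∑ i, a i * ∫ ω, Y ω i ^ 2 ∂P := by
        rw [integral_finsetSum _ fun i _ => hint i]
        simp only [integral_const_mul]

lemma mgf_le_exp_of_abs_le [IsProbabilityMeasure P] {X : Ω → ℝ} {c d t : ℝ} (hd : 0 < d)
    (hX : AEMeasurable X P) (hb : ∀ᵐ ω ∂P, |X ω| ≤ d) (hmean : ∫ ω, X ω ∂P = 0)
    (hvar : ∫ ω, X ω ^ 2 ∂P ≤ c * d ^ 2) (ht : 0 ≤ t) :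
    mgf X P t ≤ Real.exp (c * (Real.exp (t * d) - 1 - t * d)) := by
  set g := Real.exp (t * d) - 1 - t * d
  have hg : 0 ≤ g := by linarith [Real.add_one_le_exp (t * d)]
  have hint : Integrable X P := integrable_of_abs_le hX hb
  have hint2 : Integrable (fun ω => X ω ^ 2 / d ^ 2 * g) P :=
    ((integrable_sq_of_abs_le hX hb).div_const _).mul_const _
  have hint1 : Integrable (fun ω => 1 + t * X ω) P := (integrable_const 1).add (hint.const_mul t)
  calc mgf X P t ≤ ∫ ω, 1 + t * X ω + X ω ^ 2 / d ^ 2 * g ∂P := by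
        refine integral_mono_of_nonneg (.of_forall fun _ => (Real.exp_pos _).le)
          (hint1.add hint2) ?_
        filter_upwards [hb] with ω h
        linarith [Real.exp_mul_sub_one_sub_le hd ht h]
    _ = 1 + (∫ ω, X ω ^ 2 ∂P) / d ^ 2 * g := by
        rw [integral_add hint1 hint2, integral_add (integrable_const 1) (hint.const_mul t),
          integral_const_mul, integral_mul_const, integral_div, hmean]
        simp
    _ ≤ 1 + c * g := by
        gcongr
        rwa [div_le_iff₀ (by positivity)]
    _ ≤ Real.exp (c * g) := by linarith [Real.add_one_le_exp (c * g)]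

lemma measureReal_sum_ge_le_exp_neg_tau [IsProbabilityMeasure P] {n : ℕ} {X : Fin n → Ω → ℝ}
    {c d ε : ℝ} (hd : 0 < d) (hε : 0 ≤ ε) (hmeas : ∀ j, Measurable (X j))
    (hindep : iIndepFun X P) (hb : ∀ j, ∀ᵐ ω ∂P, |X j ω| ≤ d) (hmean : ∀ j, ∫ ω, X j ω ∂P = 0)
    (hvar : ∀ j, ∫ ω, X j ω ^ 2 ∂P ≤ c * d ^ 2) :
    P.real {ω | n * c * d * ε ≤ ∑ j, X j ω} ≤ Real.exp (-(n * c * tau ε)) := by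
  set t := Real.log (1 + ε) / d
  have ht : 0 ≤ t := div_nonneg (Real.log_nonneg (by linarith)) hd.le
  have htd : t * d = Real.log (1 + ε) := div_mul_cancel₀ _ hd.ne'
  have hint : Integrable (fun ω => Real.exp (t * (∑ j, X j) ω)) P :=
    hindep.integrable_exp_mul_sum hmeas fun j _ =>
      integrable_of_abs_le ((hmeas j).const_mul t).exp.aemeasurable (d := Real.exp (t * d)) <| by
        filter_upwards [hb j] with ω h
        rw [abs_of_pos (Real.exp_pos _), Real.exp_le_exp]
        exact mul_le_mul_of_nonneg_left ((le_abs_self _).trans h) ht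
  have hmgf : mgf (∑ j, X j) P t ≤ Real.exp (n * (c * (Real.exp (t * d) - 1 - t * d))) := by
    rw [hindep.mgf_sum hmeas]
    calc ∏ j, mgf (X j) P t ≤ ∏ _j : Fin n, Real.exp (c * (Real.exp (t * d) - 1 - t * d)) :=
          prod_le_prod (fun j _ => mgf_nonneg) fun j _ =>
            mgf_le_exp_of_abs_le hd (hmeas j).aemeasurable (hb j) (hmean j) (hvar j) ht
      _ = _ := by rw [prod_const, card_univ, Fintype.card_fin, Real.exp_nat_mul]
  calc P.real {ω | n * c * d * ε ≤ ∑ j, X j ω}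
      ≤ Real.exp (-t * (n * c * d * ε)) * mgf (∑ j, X j) P t := by
        simpa only [Finset.sum_apply] using measure_ge_le_exp_mul_mgf _ ht hint
    _ ≤ Real.exp (-t * (n * c * d * ε)) * Real.exp (n * (c * (Real.exp (t * d) - 1 - t * d))) :=
        by gcongr
    _ = Real.exp (-(n * c * tau ε)) := by
        rw [← Real.exp_add, show -t * (n * c * d * ε) = -(t * d) * (n * c * ε) by ring, htd,
          Real.exp_log (by linarith), tau]
        congr 1
        ring

lemma measureReal_abs_sum_ge_le_two_mul_exp_neg_tau [IsProbabilityMeasure P] {n : ℕ}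
    {X : Fin n → Ω → ℝ} {c d ε : ℝ} (hd : 0 < d) (hε : 0 ≤ ε) (hmeas : ∀ j, Measurable (X j))
    (hindep : iIndepFun X P) (hb : ∀ j, ∀ᵐ ω ∂P, |X j ω| ≤ d) (hmean : ∀ j, ∫ ω, X j ω ∂P = 0)
    (hvar : ∀ j, ∫ ω, X j ω ^ 2 ∂P ≤ c * d ^ 2) :
    P.real {ω | n * c * d * ε ≤ |∑ j, X j ω|} ≤ 2 * Real.exp (-(n * c * tau ε)) := by
  have hupper := measureReal_sum_ge_le_exp_neg_tau hd hε hmeas hindep hb hmean hvar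
  have hlower := measureReal_sum_ge_le_exp_neg_tau (X := fun j ω => -X j ω) hd hε
    (fun j => (hmeas j).neg) (hindep.comp (fun _ => Neg.neg) fun _ => measurable_neg)
    (by simpa only [abs_neg] using hb) (by simpa only [integral_neg, neg_eq_zero] using hmean)
    (by simpa only [neg_sq] using hvar)
  have hsub : {ω | n * c * d * ε ≤ |∑ j, X j ω|} ⊆
      {ω | n * c * d * ε ≤ ∑ j, X j ω} ∪ {ω | n * c * d * ε ≤ ∑ j, -X j ω} := by
    intro ω (hω : n * c * d * ε ≤ |∑ j, X j ω|)
    simpa only [mem_union, mem_ofPred_eq, sum_neg_distrib] using le_abs.mp hω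
  calc P.real {ω | n * c * d * ε ≤ |∑ j, X j ω|}
      ≤ P.real ({ω | n * c * d * ε ≤ ∑ j, X j ω} ∪ {ω | n * c * d * ε ≤ ∑ j, -X j ω}) :=
          measureReal_mono hsub
    _ ≤ _ := measureReal_union_le _ _
    _ ≤ 2 * Real.exp (-(n * c * tau ε)) := by linarith

end Bennett

theorem concentration_inequality
    {Ω : Type*} [MeasurableSpace Ω] (P : Measure Ω) [IsProbabilityMeasure P]
    (n : ℕ) (hn : 1 ≤ n) (r : ℕ) (d : ℝ) (hd : 0 < d)
    (Z : Fin n → Ω → (Fin (r + 1) → ℝ))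
    (hmeas : ∀ j, Measurable (Z j))
    (hindep : iIndepFun Z P)
    (hident : ∀ j, Measure.map (Z j) P = Measure.map (Z ⟨0, hn⟩) P)
    (hmean : ∀ i, ∫ ω, Z ⟨0, hn⟩ ω i ∂P = 0)
    (hbound : ∀ j i, ∀ᵐ ω ∂P, |Z j ω i| ≤ d)
    (a : Fin (r + 1) → ℝ) (ha : ∀ i, 0 ≤ a i) (hsum : ∑ i, a i = 1)
    (W : Ω → ℝ) (hW : W = fun ω => ∑ j, ∑ i, a i * Z j ω i)
    (v : ℝ) (hv : v = ∑ i, a i * ∫ ω, (Z ⟨0, hn⟩ ω i) ^ 2 ∂P)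
    (c : ℝ) (hc : v / d ^ 2 ≤ c) (ε : ℝ) (hε : 0 < ε) :
    P {ω | |W ω| ≥ n * c * d * ε} ≤ ENNReal.ofReal (2 * Real.exp (-(n * c * tau ε))) := by
  subst hW
  set j₀ : Fin n := ⟨0, hn⟩
  set ℓ : (Fin (r + 1) → ℝ) → ℝ := fun z => ∑ i, a i * z i
  have hℓ : Measurable ℓ := by fun_prop
  have hXident j : IdentDistrib (ℓ ∘ Z j) (ℓ ∘ Z j₀) P P :=
    (IdentDistrib.mk (hmeas j).aemeasurable (hmeas j₀).aemeasurable (hident j)).comp hℓ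
  have hb j : ∀ᵐ ω ∂P, |ℓ (Z j ω)| ≤ d := by
    filter_upwards [ae_all_iff.mpr (hbound j)] with ω h
    exact abs_sum_mul_le_of_sum_eq_one ha hsum h
  have hcoord i : AEMeasurable (fun ω => Z j₀ ω i) P :=
    ((measurable_pi_apply i).comp (hmeas j₀)).aemeasurable
  have hmean₀ : ∫ ω, ℓ (Z j₀ ω) ∂P = 0 := by
    have hint i : Integrable (fun ω => a i * Z j₀ ω i) P :=
      (integrable_of_abs_le (hcoord i) (hbound j₀ i)).const_mul _
    simp only [ℓ, integral_finsetSum _ fun i _ => hint i, integral_const_mul, hmean, mul_zero,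
      sum_const_zero]
  have hvar₀ : ∫ ω, ℓ (Z j₀ ω) ^ 2 ∂P ≤ c * d ^ 2 :=
    calc _ ≤ v := hv ▸ integral_sq_sum_mul_le
          (fun i => integrable_sq_of_abs_le (hcoord i) (hbound j₀ i)) ha hsum
      _ ≤ c * d ^ 2 := (div_le_iff₀ (by positivity)).mp hc
  rw [← ofReal_measureReal]
  exact ENNReal.ofReal_le_ofReal <| measureReal_abs_sum_ge_le_two_mul_exp_neg_tau hd hε.le
    (fun j => hℓ.comp (hmeas j)) (hindep.comp (fun _ => ℓ) fun _ => hℓ) hb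
    (fun j => (hXident j).integral_eq.trans hmean₀)
    (fun j => ((hXident j).comp (measurable_id.pow_const 2)).integral_eq.trans_le hvar₀)
end
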